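/- Let G_ω be an increasing weighted tree, let C ≠ V(G) be a vertex cover of G, let S = V(G)∖C, and write N_G(S) = {r_1,…,r_k}. For each i let T^i denote the connected component of G_S containing r_i. Then C is a strong vertex cover of G_ω if and only if G_S has exactly k connected components, namely T^1,…,T^k. Moreover, if C is a strong vertex cover, then each (T^i_ω, r_i) is an increasing weighted tree and s(C) = Σ_{i=1}^k s(r_i, T^i_ω). -/

import Mathlib

open SimpleGraph

noncomputable section

variable {V : Type*}

/-- `p 0, p 1, …, p k` is a simple path in `G`: the vertices are pairwise distinct and
consecutive vertices are adjacent. -/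
def IsSimplePathOn (G : SimpleGraph V) (p : ℕ → V) (k : ℕ) : Prop :=
  (∀ i ≤ k, ∀ j ≤ k, p i = p j → i = j) ∧ ∀ i < k, G.Adj (p i) (p (i + 1))

/-- The path `p 0, …, p k` is increasing for the weight `ω`. -/
def IsIncreasingPath (ω : V → V → ℕ) (p : ℕ → V) (k : ℕ) : Prop :=
  ∀ i, i + 2 ≤ k → ω (p i) (p (i + 1)) ≤ ω (p (i + 1)) (p (i + 2))

/-- A leaf is a vertex of degree one. -/
def IsLeafVertex (G : SimpleGraph V) (x : V) : Prop := ∃! y, G.Adj x y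

/-- `(G_ω, v)` is an increasing weighted tree with root `v`: `G` is a tree and every
simple path from a leaf to `v` is increasing. -/
def IsIncreasingWeightedTree (G : SimpleGraph V) (ω : V → V → ℕ) (v : V) : Prop :=
  G.IsTree ∧ ∀ (p : ℕ → V) (k : ℕ), IsSimplePathOn G p k → IsLeafVertex G (p 0) → p k = v →
    IsIncreasingPath ω p k

/-- `S` is an independent set of `G`. -/
def IsIndepSetOn (G : SimpleGraph V) (S : Set V) : Prop :=
  ∀ a ∈ S, ∀ b ∈ S, ¬ G.Adj a b

/-- `N_G(S)`, the neighbourhood of the set `S`. -/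
def setNbhd (G : SimpleGraph V) (S : Set V) : Set V :=
  {u | u ∉ S ∧ ∃ z ∈ S, G.Adj u z}

/-- `ν_S(u) = min { ω(uz) ∣ z ∈ S ∩ N_G(u) }`. -/
def nuWt (G : SimpleGraph V) (ω : V → V → ℕ) (S : Set V) (u : V) : ℕ :=
  sInf {w | ∃ z ∈ S, G.Adj u z ∧ w = ω u z}

/-- The graph `G_S`: its vertices are those outside `S`, its edges are those of `G ∖ S`
except that every edge `uz` with `u ∈ N_G(S)` and `ω(uz) ≥ ν_S(u)` is removed. -/
def GSgraph (G : SimpleGraph V) (ω : V → V → ℕ) (S : Set V) : SimpleGraph V where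
  Adj a b := G.Adj a b ∧ a ∉ S ∧ b ∉ S ∧
    (a ∈ setNbhd G S → ω a b < nuWt G ω S a) ∧
    (b ∈ setNbhd G S → ω b a < nuWt G ω S b)
  symm := by
    constructor
    rintro a b ⟨h1, h2, h3, h4, h5⟩
    exact ⟨h1.symm, h3, h2, h5, h4⟩
  loopless := by
    constructor
    rintro a ⟨h, -⟩
    exact G.loopless.irrefl a h

/-- `C` is a vertex cover of `G`. -/
def IsVertexCoverOn (G : SimpleGraph V) (C : Set V) : Prop :=
  ∀ a b, G.Adj a b → a ∈ C ∨ b ∈ C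

/-- `C` is a minimal vertex cover of `G`. -/
def IsMinimalVertexCover (G : SimpleGraph V) (C : Set V) : Prop :=
  IsVertexCoverOn G C ∧ ∀ C' ⊆ C, IsVertexCoverOn G C' → C' = C

/-- A path `p 0 → ⋯ → p m` as in the definition of a strong vertex cover (with `S` the
complement of the cover): it avoids `N_G(S)` except at the last vertex `x = p m ∈ N_G(S)`,
and `ω(p (m-1), x) < ν_S(x)`. -/
def IsStrongWitnessPath (G : SimpleGraph V) (ω : V → V → ℕ) (S : Set V)
    (p : ℕ → V) (m : ℕ) : Prop :=
  IsSimplePathOn G p m ∧ 1 ≤ m ∧ (∀ i < m, p i ∉ setNbhd G S) ∧ p m ∈ setNbhd G S ∧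
    ω (p (m - 1)) (p m) < nuWt G ω S (p m)

/-- `C` is a strong vertex cover of `G_ω`. -/
def IsStrongVertexCover (G : SimpleGraph V) (ω : V → V → ℕ) (C : Set V) : Prop :=
  IsVertexCoverOn G C ∧ C ≠ Set.univ ∧
    (IsMinimalVertexCover G C ∨
      ∀ w ∈ C \ setNbhd G Cᶜ, ∃ (p : ℕ → V) (m : ℕ),
        IsStrongWitnessPath G ω Cᶜ p m ∧ p 0 = w)

/-- `u` is a special vertex of the vertex cover `C`. -/
def IsSpecialVertexOfCover (G : SimpleGraph V) (ω : V → V → ℕ) (C : Set V) (u : V) : Prop :=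
  ∃ (p : ℕ → V) (m : ℕ), IsStrongWitnessPath G ω Cᶜ p m ∧ p 0 ∈ C \ setNbhd G Cᶜ ∧
    2 ≤ m ∧ p 1 = u ∧ ω (p 0) (p 1) = ω (p 1) (p 2)

/-- `s(C)`, the number of special vertices of the cover `C`. -/
def coverSpecialCount (G : SimpleGraph V) (ω : V → V → ℕ) (C : Set V) : ℕ :=
  {u | IsSpecialVertexOfCover G ω C u}.ncard

/-- `w` is a special vertex of the rooted weighted tree `(G_ω, v)`: there is a simple path
`u → w → x → ⋯ → v` ending at `v` with `ω(uw) = ω(wx)`. -/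
def IsSpecialVertexOfRoot (G : SimpleGraph V) (ω : V → V → ℕ) (v w : V) : Prop :=
  ∃ (p : ℕ → V) (m : ℕ), IsSimplePathOn G p m ∧ 2 ≤ m ∧ p m = v ∧ p 1 = w ∧
    ω (p 0) (p 1) = ω (p 1) (p 2)

/-- `s(v, G_ω)`, the number of special vertices of `(G_ω, v)`. -/
def rootSpecialCount (G : SimpleGraph V) (ω : V → V → ℕ) (v : V) : ℕ :=
  {w | IsSpecialVertexOfRoot G ω v w}.ncard

/-!
Measure positions by the distance to the root `v`. In an increasing tree every simple path ending
at `v` is increasing, not only those starting at a leaf; hence at a vertex `b` whose neighbour `c`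
is closer to `v`, every other edge `ab` satisfies `ω(ab) ≤ ω(bc)`. So if a simple path ends with
an edge lighter than another edge at its endpoint, its last step, and then every step, heads
towards `v`, and the path is increasing. A `G_S`-path ending at `x ∈ N_G(S)` is of this kind, its
last edge being lighter than `ν_S(x)`. This makes the component of `G_S` through each `r_i` an
increasing tree rooted at `r_i`, and forbids `G_S`-paths between two vertices of `N_G(S)`. The
witness paths of a strong cover are exactly the `G_S`-paths meeting `N_G(S)` only at their end,
which gives both the equivalence and the count of special vertices.
-/

namespace IsSimplePathOn

variable {G H : SimpleGraph V} {p : ℕ → V} {m : ℕ}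

lemma mono {n : ℕ} (hp : IsSimplePathOn G p m) (hn : n ≤ m) : IsSimplePathOn G p n :=
  ⟨fun i hi j hj => hp.1 i (hi.trans hn) j (hj.trans hn), fun i hi => hp.2 i (hi.trans_le hn)⟩

lemma map {W : Type*} {G' : SimpleGraph W} (f : G →g G') (hf : Function.Injective f)
    (hp : IsSimplePathOn G p m) : IsSimplePathOn G' (f ∘ p) m :=
  ⟨fun i hi j hj hij => hp.1 i hi j hj (hf hij), fun i hi => f.map_adj (hp.2 i hi)⟩

lemma of_le (hp : IsSimplePathOn H p m) (hle : H ≤ G) : IsSimplePathOn G p m :=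
  ⟨hp.1, fun i hi => hle (hp.2 i hi)⟩

lemma induce_val {s : Set V} {q : ℕ → s} (hq : IsSimplePathOn (G.induce s) q m) :
    IsSimplePathOn G (Subtype.val ∘ q) m :=
  hq.map (Embedding.induce s).toHom Subtype.val_injective

lemma exists_lift {s : Set V} (hp : IsSimplePathOn G p m) (hs : ∀ i ≤ m, p i ∈ s) :
    ∃ q : ℕ → s, IsSimplePathOn (G.induce s) q m ∧ ∀ i ≤ m, (q i : V) = p i := by
  refine ⟨fun i => ⟨p (min i m), hs _ (min_le_right i m)⟩,
    ⟨fun i hi j hj hij => ?_, fun i hi => ?_⟩, fun i hi => by simp [hi]⟩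
  · simpa [hi, hj] using hp.1 i hi j hj (by simpa [hi, hj] using congrArg Subtype.val hij)
  · simpa [hi.le, Nat.succ_le_of_lt hi] using hp.2 i hi

lemma reachable (hp : IsSimplePathOn G p m) {t : ℕ} (ht : t ≤ m) : G.Reachable (p t) (p m) :=
  Nat.decreasingInduction (motive := fun t _ => G.Reachable (p t) (p m))
    (fun k hk ih => (hp.2 k hk).reachable.trans ih) (Reachable.refl _) ht

end IsSimplePathOn

lemma SimpleGraph.Walk.IsPath.isSimplePathOn_getVert {G : SimpleGraph V} {u w : V}
    {W : G.Walk u w} (hW : W.IsPath) : IsSimplePathOn G W.getVert W.length :=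
  ⟨fun _ hi _ hj h => hW.getVert_injOn hi hj h, fun _ hi => W.adj_getVert_succ hi⟩

lemma SimpleGraph.Walk.dist_le_of_mem_support {G : SimpleGraph V} {u w x : V} (W : G.Walk u w)
    (hx : x ∈ W.support) : G.dist u x ≤ W.length := by
  classical
  exact (dist_le _).trans (W.length_takeUntil_le_length hx)

namespace SimpleGraph.IsTree

variable {G : SimpleGraph V}

lemma eq_of_adj_of_dist_lt (hT : G.IsTree) (v : V) {a b c : V} (hba : G.Adj b a)
    (hbc : G.Adj b c) (ha : G.dist v a < G.dist v b) (hc : G.dist v c < G.dist v b) : a = c := by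
  obtain ⟨p, hp, -⟩ := hT.connected.exists_path_of_dist v b
  have hpen : ∀ x, G.Adj b x → G.dist v x < G.dist v b → x = p.penultimate := by
    intro x hbx hx
    obtain ⟨q, hq, hql⟩ := hT.connected.exists_path_of_dist v x
    have hb : b ∉ q.support := fun hb => (q.dist_le_of_mem_support hb).not_gt (hql ▸ hx)
    exact hT.isAcyclic.eq_penultimate_of_adj_end hp hbx
      (hT.isAcyclic.mem_support_of_ne_mem_support_of_adj_of_isPath hp hq hbx hb)
  exact (hpen a hba ha).trans (hpen c hbc hc).symm

lemma dist_succ_lt_of_le (hT : G.IsTree) (v : V) {p : ℕ → V} {m k : ℕ}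
    (hp : IsSimplePathOn G p m) (hk : k + 1 ≤ m)
    (h : G.dist v (p (k + 1)) < G.dist v (p k)) {j : ℕ} (hj : j ≤ k) :
    G.dist v (p (j + 1)) < G.dist v (p j) := by
  induction hj using Nat.decreasingInduction with
  | self => exact h
  | of_succ j hj ih =>
    rcases hT.dist_eq_dist_add_one_of_adj v (hp.2 j (by omega)) with h' | h'
    · omega
    · have := hT.eq_of_adj_of_dist_lt v (hp.2 j (by omega)).symm (hp.2 (j + 1) (by omega))
        (by omega) ih
      exact absurd (hp.1 j (by omega) (j + 2) (by omega) this) (by omega)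

end SimpleGraph.IsTree

namespace IsIncreasingWeightedTree

variable [Fintype V] {G : SimpleGraph V} {ω : V → V → ℕ} {v : V}

open Walk in
/-- Extend the path backwards, away from the root, until it starts at a leaf. -/
theorem isIncreasingPath_of_isPath (hG : IsIncreasingWeightedTree G ω v) {u : V}
    (W : G.Walk u v) (hW : W.IsPath) : IsIncreasingPath ω W.getVert W.length := by
  induction hn : Fintype.card V - W.length using Nat.strong_induction_on generalizing u with
  | _ n ih =>
  by_cases hleaf : IsLeafVertex G u
  · exact hG.2 _ _ hW.isSimplePathOn_getVert (by rwa [W.getVert_zero]) W.getVert_length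
  cases W with
  | nil => intro i hi; simp at hi
  | @cons _ x _ hux W' =>
    obtain ⟨y, huy, hyx⟩ : ∃ y, G.Adj u y ∧ y ≠ x := by
      by_contra! h
      exact hleaf ⟨x, hux, h⟩
    have hy : y ∉ (cons hux W').support :=
      fun hy => hyx (by simpa using hG.1.isAcyclic.eq_snd_of_adj_start hW huy hy)
    have hlonger : (cons huy.symm (cons hux W')).IsPath := hW.cons hy
    have hlt := hlonger.length_lt
    intro i hi
    simpa using ih _ (by simp only [length_cons] at hlt hn ⊢; omega) _ hlonger rfl (i + 1)
      (by simp only [length_cons] at hi ⊢; omega)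

open Walk in
lemma weight_le_of_dist_lt (hG : IsIncreasingWeightedTree G ω v) {a b c : V} (hab : G.Adj a b)
    (hbc : G.Adj b c) (hac : a ≠ c) (hcb : G.dist v c < G.dist v b) : ω a b ≤ ω b c := by
  obtain ⟨q, hq, hql⟩ := hG.1.connected.exists_path_of_dist v c
  have hfar : ∀ x, G.dist v c < G.dist v x → x ∉ q.support :=
    fun x hx hxq => (q.dist_le_of_mem_support hxq).not_gt (hql ▸ hx)
  have hba : G.dist v b ≤ G.dist v a := by
    by_contra! h
    exact hac (hG.1.eq_of_adj_of_dist_lt v hab.symm hbc h hcb)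
  have hpath : (cons hab (cons hbc q.reverse)).IsPath := by
    simp only [cons_isPath_iff, support_cons, List.mem_cons, support_reverse, List.mem_reverse,
      not_or]
    exact ⟨⟨hq.reverse, hfar b hcb⟩, hab.ne, hfar a (by omega)⟩
  simpa using hG.isIncreasingPath_of_isPath _ hpath 0 (by simp)

lemma dist_lt_of_weight_lt (hG : IsIncreasingWeightedTree G ω v) (hsym : ∀ a b, ω a b = ω b a)
    {a b c : V} (hab : G.Adj a b) (hbc : G.Adj b c) (h : ω b a < ω b c) :
    G.dist v b < G.dist v a := by
  rcases hG.1.dist_eq_dist_add_one_of_adj v hab with h' | h'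
  · omega
  · have := hG.weight_le_of_dist_lt hbc.symm hab.symm (by rintro rfl; omega) (by omega)
    rw [hsym] at this
    omega

lemma isIncreasingPath_of_dist_succ_lt (hG : IsIncreasingWeightedTree G ω v) {p : ℕ → V}
    {m : ℕ} (hp : IsSimplePathOn G p m) (h : ∀ j < m, G.dist v (p (j + 1)) < G.dist v (p j)) :
    IsIncreasingPath ω p m := fun i hi =>
  hG.weight_le_of_dist_lt (hp.2 i (by omega)) (hp.2 (i + 1) (by omega))
    (fun h' => absurd (hp.1 i (by omega) (i + 2) hi h') (by omega)) (h (i + 1) (by omega))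

end IsIncreasingWeightedTree

section GSgraph

variable {G : SimpleGraph V} {ω : V → V → ℕ} {S : Set V}

lemma GSgraph_le : GSgraph G ω S ≤ G := fun _ _ h => h.1

lemma exists_eq_nuWt {u : V} (hu : u ∈ setNbhd G S) :
    ∃ z ∈ S, G.Adj u z ∧ ω u z = nuWt G ω S u := by
  obtain ⟨-, z, hz, huz⟩ := hu
  obtain ⟨z', hz', huz', h⟩ := Nat.sInf_mem (s := {w | ∃ z ∈ S, G.Adj u z ∧ w = ω u z})
    ⟨ω u z, z, hz, huz, rfl⟩
  exact ⟨z', hz', huz', h.symm⟩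

lemma nuWt_le {u z : V} (hz : z ∈ S) (huz : G.Adj u z) : nuWt G ω S u ≤ ω u z :=
  Nat.sInf_le ⟨z, hz, huz, rfl⟩

lemma isStrongWitnessPath_of_GSgraph (hsym : ∀ a b, ω a b = ω b a) {p : ℕ → V} {m : ℕ}
    (hp : IsSimplePathOn (GSgraph G ω S) p m) (hm : 1 ≤ m) (hend : p m ∈ setNbhd G S)
    (havoid : ∀ i < m, p i ∉ setNbhd G S) : IsStrongWitnessPath G ω S p m := by
  have hlast := hp.2 (m - 1) (by omega)
  rw [Nat.sub_add_cancel hm] at hlast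
  exact ⟨hp.of_le GSgraph_le, hm, havoid, hend, hsym (p m) _ ▸ hlast.2.2.2.2 hend⟩

lemma exists_isStrongWitnessPath_of_reachable (hsym : ∀ a b, ω a b = ω b a) {w x : V}
    (hw : w ∉ setNbhd G S) (hx : x ∈ setNbhd G S) (hwx : (GSgraph G ω S).Reachable w x) :
    ∃ (p : ℕ → V) (m : ℕ), IsStrongWitnessPath G ω S p m ∧ p 0 = w := by
  classical
  obtain ⟨W, hW, -⟩ := hwx.exists_path_of_dist
  have hex : ∃ s, W.getVert s ∈ setNbhd G S := ⟨W.length, by rwa [W.getVert_length]⟩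
  have hm : 1 ≤ Nat.find hex :=
    Nat.one_le_iff_ne_zero.2 fun h => hw (by simpa [h] using Nat.find_spec hex)
  exact ⟨W.getVert, Nat.find hex, isStrongWitnessPath_of_GSgraph hsym
    (hW.isSimplePathOn_getVert.mono (Nat.find_min' hex (by rwa [W.getVert_length]))) hm
    (Nat.find_spec hex) (fun i hi => Nat.find_min hex hi), W.getVert_zero⟩

end GSgraph

section Cover

variable {G : SimpleGraph V} {ω : V → V → ℕ} {C : Set V}

lemma IsMinimalVertexCover.subset_setNbhd (h : IsMinimalVertexCover G C) :
    C ⊆ setNbhd G Cᶜ := by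
  intro x hx
  by_contra hxN
  have key : ∀ a b, G.Adj a b → a ∈ C → a ∈ C \ {x} ∨ b ∈ C \ {x} := by
    intro a b hab ha
    by_cases hax : a = x
    · subst hax
      refine Or.inr ⟨?_, hab.ne'⟩
      by_contra hb
      exact hxN ⟨fun h' => h' hx, b, hb, hab⟩
    · exact Or.inl ⟨ha, hax⟩
  have hcover : IsVertexCoverOn G (C \ {x}) := fun a b hab =>
    (h.1 a b hab).elim (key a b hab) fun hb => (key b a hab.symm hb).symm
  rw [← h.2 _ Set.sdiff_subset hcover] at hx
  exact hx.2 rfl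

namespace IsStrongWitnessPath

variable {p : ℕ → V} {m : ℕ}

lemma mem_cover (hsym : ∀ a b, ω a b = ω b a) (hC : IsVertexCoverOn G C)
    (hw : IsStrongWitnessPath G ω Cᶜ p m) {i : ℕ} (hi : i ≤ m) : p i ∈ C := by
  obtain ⟨hp, -, havoid, hend, hlast⟩ := hw
  rcases hi.lt_or_eq with hi | rfl
  · by_contra hiC
    have hadj := hp.2 i hi
    rcases Nat.lt_or_ge (i + 1) m with hi' | hi'
    · have hC' : p (i + 1) ∈ C := (hC _ _ hadj).resolve_left hiC
      exact havoid (i + 1) hi' ⟨fun h => h hC', p i, hiC, hadj.symm⟩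
    · obtain rfl : m = i + 1 := by omega
      have hν := nuWt_le (ω := ω) (S := Cᶜ) hiC hadj.symm
      rw [Nat.add_sub_cancel, hsym] at hlast
      omega
  · exact Set.notMem_compl_iff.1 hend.1

lemma isSimplePathOn_GSgraph (hsym : ∀ a b, ω a b = ω b a) (hC : IsVertexCoverOn G C)
    (hw : IsStrongWitnessPath G ω Cᶜ p m) : IsSimplePathOn (GSgraph G ω Cᶜ) p m := by
  refine ⟨hw.1.1, fun i hi => ⟨hw.1.2 i hi, fun h => h (hw.mem_cover hsym hC hi.le),
    fun h => h (hw.mem_cover hsym hC hi), fun h => absurd h (hw.2.2.1 i hi), fun h => ?_⟩⟩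
  obtain rfl : i + 1 = m := by_contra fun hne => hw.2.2.1 (i + 1) (by omega) h
  simpa [hsym (p (i + 1))] using hw.2.2.2.2

end IsStrongWitnessPath

lemma IsStrongVertexCover.exists_reachable (hsym : ∀ a b, ω a b = ω b a)
    (hs : IsStrongVertexCover G ω C) {x : V} (hx : x ∈ C) :
    ∃ y ∈ setNbhd G Cᶜ, (GSgraph G ω Cᶜ).Reachable y x := by
  by_cases hxN : x ∈ setNbhd G Cᶜ
  · exact ⟨x, hxN, Reachable.refl x⟩
  rcases hs.2.2 with hmin | hpaths
  · exact absurd (hmin.subset_setNbhd hx) hxN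
  · obtain ⟨p, m, hw, rfl⟩ := hpaths _ ⟨hx, hxN⟩
    exact ⟨p m, hw.2.2.2.1, ((hw.isSimplePathOn_GSgraph hsym hs.1).reachable m.zero_le).symm⟩

end Cover

namespace IsIncreasingWeightedTree

variable [Fintype V] {G : SimpleGraph V} {ω : V → V → ℕ} {v : V} {S : Set V}

lemma dist_succ_lt_of_GSgraph (hG : IsIncreasingWeightedTree G ω v)
    (hsym : ∀ a b, ω a b = ω b a) {p : ℕ → V} {n : ℕ}
    (hp : IsSimplePathOn (GSgraph G ω S) p (n + 1)) (hend : p (n + 1) ∈ setNbhd G S) {j : ℕ}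
    (hj : j ≤ n) : G.dist v (p (j + 1)) < G.dist v (p j) := by
  obtain ⟨z, -, hz, hzν⟩ := exists_eq_nuWt (ω := ω) hend
  have hlast := hp.2 n n.lt_succ_self
  have hlt := hG.dist_lt_of_weight_lt hsym hlast.1 hz (hzν ▸ hlast.2.2.2.2 hend)
  exact hG.1.dist_succ_lt_of_le v (hp.of_le GSgraph_le) le_rfl hlt hj

lemma isIncreasingPath_of_GSgraph (hG : IsIncreasingWeightedTree G ω v)
    (hsym : ∀ a b, ω a b = ω b a) {p : ℕ → V} {m : ℕ}
    (hp : IsSimplePathOn (GSgraph G ω S) p m) (hend : p m ∈ setNbhd G S) :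
    IsIncreasingPath ω p m := by
  cases m with
  | zero => intro i hi; omega
  | succ n =>
    exact hG.isIncreasingPath_of_dist_succ_lt (hp.of_le GSgraph_le)
      fun j hj => hG.dist_succ_lt_of_GSgraph hsym hp hend (by omega)

/-- A `G_S`-path from `x` would head towards the root from its first vertex on; but its first
edge is lighter than the edge from `x` to the neighbour realising `ν_S(x)`. -/
lemma not_reachable_GSgraph (hG : IsIncreasingWeightedTree G ω v)
    (hsym : ∀ a b, ω a b = ω b a) {x y : V} (hx : x ∈ setNbhd G S) (hy : y ∈ setNbhd G S)
    (hxy : x ≠ y) : ¬ (GSgraph G ω S).Reachable x y := by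
  rintro hr
  obtain ⟨W, hW, -⟩ := hr.exists_path_of_dist
  obtain ⟨n, hn⟩ : ∃ n, W.length = n + 1 :=
    Nat.exists_eq_succ_of_ne_zero fun h => hxy (W.eq_of_length_eq_zero h)
  have hp := hW.isSimplePathOn_getVert
  rw [hn] at hp
  have hstep := hG.dist_succ_lt_of_GSgraph hsym hp (by rwa [← hn, W.getVert_length]) n.zero_le
  have hfirst : (GSgraph G ω S).Adj x (W.getVert 1) := by simpa using hp.2 0 n.succ_pos
  rw [W.getVert_zero] at hstep
  obtain ⟨z, hzS, hxz, hzν⟩ := exists_eq_nuWt (ω := ω) hx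
  have hle := hG.weight_le_of_dist_lt hxz.symm hfirst.1
    (fun h => hfirst.2.2.1 (h ▸ hzS)) hstep
  have hlt := hfirst.2.2.2.1 hx
  rw [hsym] at hle
  omega

lemma isIncreasingWeightedTree_induce_supp (hG : IsIncreasingWeightedTree G ω v)
    (hsym : ∀ a b, ω a b = ω b a) {x : V} (hx : x ∈ setNbhd G S) :
    IsIncreasingWeightedTree
      ((GSgraph G ω S).induce ((GSgraph G ω S).connectedComponentMk x).supp)
      (fun a b => ω a.1 b.1) ⟨x, rfl⟩ :=
  ⟨(hG.1.isAcyclic.anti GSgraph_le).isTree_connectedComponent _,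
    fun _ _ hq _ hend => hG.isIncreasingPath_of_GSgraph hsym hq.induce_val
      (by simpa [hend] using hx)⟩

end IsIncreasingWeightedTree

section SpecialVertices

variable {G : SimpleGraph V} {ω : V → V → ℕ} {C : Set V}

lemma IsSpecialVertexOfCover.exists_isSpecialVertexOfRoot (hsym : ∀ a b, ω a b = ω b a)
    (hC : IsVertexCoverOn G C) {u : V} (hu : IsSpecialVertexOfCover G ω C u) :
    ∃ x ∈ setNbhd G Cᶜ, ∃ w, IsSpecialVertexOfRoot
      ((GSgraph G ω Cᶜ).induce ((GSgraph G ω Cᶜ).connectedComponentMk x).supp)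
      (fun a b => ω a.1 b.1) ⟨x, rfl⟩ w ∧ w.1 = u := by
  obtain ⟨p, m, hw, -, hm, rfl, hωp⟩ := hu
  have hp := hw.isSimplePathOn_GSgraph hsym hC
  obtain ⟨q, hq, hqp⟩ :=
    hp.exists_lift (s := ((GSgraph G ω Cᶜ).connectedComponentMk (p m)).supp)
      fun i hi => ConnectedComponent.sound (hp.reachable hi)
  refine ⟨p m, hw.2.2.2.1, q 1, ⟨q, m, hq, hm, Subtype.ext (hqp m le_rfl), rfl, ?_⟩,
    hqp 1 (by omega)⟩
  simpa only [hqp 0 (by omega), hqp 1 (by omega), hqp 2 hm] using hωp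

lemma IsSpecialVertexOfRoot.isSpecialVertexOfCover (hsym : ∀ a b, ω a b = ω b a) {x : V}
    (hx : x ∈ setNbhd G Cᶜ)
    (hiso : ∀ y ∈ setNbhd G Cᶜ, (GSgraph G ω Cᶜ).Reachable y x → y = x) {w}
    (hw : IsSpecialVertexOfRoot
      ((GSgraph G ω Cᶜ).induce ((GSgraph G ω Cᶜ).connectedComponentMk x).supp)
      (fun a b => ω a.1 b.1) ⟨x, rfl⟩ w) :
    IsSpecialVertexOfCover G ω C w.1 := by
  obtain ⟨q, m, hq, hm, hqm, rfl, hωq⟩ := hw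
  have hp := hq.induce_val
  have hpm : (q m : V) = x := congrArg Subtype.val hqm
  have havoid : ∀ i < m, (q i : V) ∉ setNbhd G Cᶜ := fun i hi hN =>
    absurd (hp.1 i hi.le m le_rfl ((hiso _ hN (ConnectedComponent.exact (q i).2)).trans hpm.symm))
      hi.ne
  have hend : (Subtype.val ∘ q) m ∈ setNbhd G Cᶜ := by simpa [hpm] using hx
  exact ⟨_, m, isStrongWitnessPath_of_GSgraph hsym hp (by omega) hend havoid,
    ⟨Set.notMem_compl_iff.1 (hp.2 0 (by omega)).2.1, havoid 0 (by omega)⟩, hm, rfl, hωq⟩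

end SpecialVertices

lemma IsIncreasingWeightedTree.coverSpecialCount_eq_sum [Fintype V] {G : SimpleGraph V}
    {ω : V → V → ℕ} {v : V} (hG : IsIncreasingWeightedTree G ω v)
    (hsym : ∀ a b, ω a b = ω b a) {C : Set V} (hC : IsVertexCoverOn G C) {k : ℕ}
    {r : Fin k → V} (hr : Function.Injective r) (hrange : Set.range r = setNbhd G Cᶜ) :
    coverSpecialCount G ω C =
      ∑ i : Fin k, rootSpecialCount
        ((GSgraph G ω Cᶜ).induce ((GSgraph G ω Cᶜ).connectedComponentMk (r i)).supp)
        (fun a b => ω a.1 b.1) ⟨r i, rfl⟩ := by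
  have hri : ∀ i, r i ∈ setNbhd G Cᶜ := fun i => hrange ▸ Set.mem_range_self i
  set T := fun i => Subtype.val '' {w | IsSpecialVertexOfRoot
    ((GSgraph G ω Cᶜ).induce ((GSgraph G ω Cᶜ).connectedComponentMk (r i)).supp)
    (fun a b => ω a.1 b.1) ⟨r i, rfl⟩ w}
  have hunion : {u | IsSpecialVertexOfCover G ω C u} = ⋃ i, T i := by
    ext u
    refine ⟨fun hu => ?_, fun hu => ?_⟩
    · obtain ⟨x, hx, w, hw, rfl⟩ := hu.exists_isSpecialVertexOfRoot hsym hC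
      obtain ⟨i, rfl⟩ : x ∈ Set.range r := hrange ▸ hx
      exact Set.mem_iUnion.2 ⟨i, w, hw, rfl⟩
    · obtain ⟨i, w, hw, rfl⟩ := Set.mem_iUnion.1 hu
      exact hw.isSpecialVertexOfCover hsym (hri i) fun y hy hyr =>
        by_contra fun hne => hG.not_reachable_GSgraph hsym hy (hri i) hne hyr
  have hdisj : Pairwise (Function.onFun Disjoint T) := by
    intro i j hij
    refine Set.disjoint_left.2 ?_
    rintro _ ⟨a, -, rfl⟩ ⟨b, -, hba⟩
    refine hG.not_reachable_GSgraph hsym (hri i) (hri j) (hr.ne hij)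
      (ConnectedComponent.exact ?_)
    rw [← a.2, ← b.2, hba]
  rw [coverSpecialCount, hunion, Set.ncard_iUnion_of_finite (fun _ => Set.toFinite _) hdisj,
    finsum_eq_sum_of_fintype]
  exact Finset.sum_congr rfl fun i _ => Set.ncard_image_of_injective _ Subtype.val_injective

theorem strong_cover_iff_components_general {V : Type*} [Fintype V]
    (G : SimpleGraph V) (ω : V → V → ℕ)
    (hsym : ∀ a b, ω a b = ω b a)
    (v : V) (hG : IsIncreasingWeightedTree G ω v)
    (C : Set V) (hC : IsVertexCoverOn G C) (hCne : C ≠ Set.univ)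
    (k : ℕ) (r : Fin k → V) (hr : Function.Injective r)
    (hrange : Set.range r = setNbhd G Cᶜ) :
    (IsStrongVertexCover G ω C ↔
      ((∀ x ∈ C, ∃ i : Fin k, (GSgraph G ω Cᶜ).Reachable (r i) x) ∧
        ∀ i j : Fin k, i ≠ j → ¬ (GSgraph G ω Cᶜ).Reachable (r i) (r j))) ∧
    (IsStrongVertexCover G ω C →
      (∀ i : Fin k,
        IsIncreasingWeightedTree
          ((GSgraph G ω Cᶜ).induce ((GSgraph G ω Cᶜ).connectedComponentMk (r i)).supp)
          (fun a b => ω a.1 b.1) ⟨r i, rfl⟩) ∧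
      coverSpecialCount G ω C =
        ∑ i : Fin k,
          rootSpecialCount
            ((GSgraph G ω Cᶜ).induce ((GSgraph G ω Cᶜ).connectedComponentMk (r i)).supp)
            (fun a b => ω a.1 b.1) ⟨r i, rfl⟩) := by
  have hri : ∀ i, r i ∈ setNbhd G Cᶜ := fun i => hrange ▸ Set.mem_range_self i
  have hdisj : ∀ i j, i ≠ j → ¬ (GSgraph G ω Cᶜ).Reachable (r i) (r j) := fun i j hij =>
    hG.not_reachable_GSgraph hsym (hri i) (hri j) (hr.ne hij)
  refine ⟨⟨fun hs => ⟨fun x hx => ?_, hdisj⟩,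
      fun ⟨hreach, _⟩ => ⟨hC, hCne, Or.inr ?_⟩⟩,
    fun _ => ⟨fun i => hG.isIncreasingWeightedTree_induce_supp hsym (hri i),
      hG.coverSpecialCount_eq_sum hsym hC hr hrange⟩⟩
  · obtain ⟨y, hy, hyx⟩ := hs.exists_reachable hsym hx
    obtain ⟨i, rfl⟩ : y ∈ Set.range r := hrange ▸ hy
    exact ⟨i, hyx⟩
  · intro w hw
    obtain ⟨i, hi⟩ := hreach w hw.1
    exact exists_isStrongWitnessPath_of_reachable hsym hw.2 (hri i) hi.symm

/-- Lemma 1.9: let `C ≠ V(G)` be a vertex cover of the increasing weighted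
tree `G_ω`, `S = V(G) ∖ C`, and `N_G(S) = {r 1, …, r k}`.  Then `C` is a strong vertex cover
of `G_ω` iff `G_S` has exactly `k` connected components `T^1, …, T^k` with `r i ∈ T^i`
(i.e. every vertex of `C` is reachable in `G_S` from some `r i`, and distinct `r i` lie in
distinct components); moreover if `C` is strong, then each `(T^i_ω, r i)` is an increasing
weighted tree and `s(C) = ∑ i, s(r i, T^i_ω)`. -/
theorem strong_cover_iff_components {V : Type*} [Fintype V]
    (G : SimpleGraph V) (ω : V → V → ℕ)
    (hsym : ∀ a b, ω a b = ω b a) (hpos : ∀ a b, G.Adj a b → 0 < ω a b)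
    (v : V) (hG : IsIncreasingWeightedTree G ω v)
    (C : Set V) (hC : IsVertexCoverOn G C) (hCne : C ≠ Set.univ)
    (k : ℕ) (r : Fin k → V) (hr : Function.Injective r)
    (hrange : Set.range r = setNbhd G Cᶜ) :
    (IsStrongVertexCover G ω C ↔
      ((∀ x ∈ C, ∃ i : Fin k, (GSgraph G ω Cᶜ).Reachable (r i) x) ∧
        ∀ i j : Fin k, i ≠ j → ¬ (GSgraph G ω Cᶜ).Reachable (r i) (r j))) ∧
    (IsStrongVertexCover G ω C →
      (∀ i : Fin k,
        IsIncreasingWeightedTree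
          ((GSgraph G ω Cᶜ).induce ((GSgraph G ω Cᶜ).connectedComponentMk (r i)).supp)
          (fun a b => ω a.1 b.1) ⟨r i, rfl⟩) ∧
      coverSpecialCount G ω C =
        ∑ i : Fin k,
          rootSpecialCount
            ((GSgraph G ω Cᶜ).induce ((GSgraph G ω Cᶜ).connectedComponentMk (r i)).supp)
            (fun a b => ω a.1 b.1) ⟨r i, rfl⟩) :=
  strong_cover_iff_components_general G ω hsym v hG C hC hCne k r hr hrange
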